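/- Let (t_j)_{ j≥1 } be a sequence of nonnegative real numbers and let m ≥ 1 be an integer. If the shifted sequence (t_{m+j−1})_{j≥1} admits a positive realization of dimension k, then the original sequence (t_j)_{j≥1} admits a positive realization of dimension k + m − 1. -/

import Mathlib

open Matrix

/-- A positive realization of dimension `M` of a real sequence `t` (relevant for `k ≥ 1`):
a triple `(A, b, c)` with all entries nonnegative such that `t k = cᵀ A^(k-1) b` for `k ≥ 1`. -/
def IsPosRealization (M : ℕ) (A : Matrix (Fin M) (Fin M) ℝ)
    (b c : Fin M → ℝ) (t : ℕ → ℝ) : Prop :=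
  (∀ i j, 0 ≤ A i j) ∧ (∀ i, 0 ≤ b i) ∧ (∀ i, 0 ≤ c i) ∧
    ∀ k : ℕ, 1 ≤ k → t k = c ⬝ᵥ (A ^ (k - 1)).mulVec b

/-- Hadjicostis' lemma: if the sequence `t` is nonnegative and the shifted sequence
`j ↦ t (m + j - 1)` admits a positive realization of dimension `k`, then `t` admits a
positive realization of dimension `k + m - 1`. -/
theorem shifted_realization_extends (t : ℕ → ℝ) (ht : ∀ j : ℕ, 1 ≤ j → 0 ≤ t j)
    (m k : ℕ) (hm : 1 ≤ m)
    (h : ∃ (A : Matrix (Fin k) (Fin k) ℝ) (b c : Fin k → ℝ),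
      IsPosRealization k A b c (fun j => t (m + j - 1))) :
    ∃ (A : Matrix (Fin (k + m - 1)) (Fin (k + m - 1)) ℝ) (b c : Fin (k + m - 1) → ℝ),
      IsPosRealization (k + m - 1) A b c t := by
  obtain ⟨p, rfl⟩ : ∃ p, m = p + 1 := ⟨m - 1, by omega⟩
  obtain ⟨A, b, c, hA, hb, hc, hreal⟩ := h
  -- work in the sum world
  set AS : Matrix (Fin k ⊕ Fin p) (Fin k ⊕ Fin p) ℝ :=
    fromBlocks A (fun i j => if (j : ℕ) = 0 then b i else 0) 0
      (fun i j : Fin p => if (j : ℕ) = (i : ℕ) + 1 then 1 else 0) with hAS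
  set sVec : ℕ → (Fin k ⊕ Fin p → ℝ) := fun n =>
    Sum.elim (if p ≤ n then (A ^ (n - p)).mulVec b else 0)
      (fun i : Fin p => if (i : ℕ) + n + 1 = p then 1 else 0) with hsVec
  set cS : Fin k ⊕ Fin p → ℝ := Sum.elim c (fun i : Fin p => t (p - (i : ℕ))) with hcS
  have hstep : ∀ n, AS.mulVec (sVec n) = sVec (n + 1) := by
    intro n
    simp only [hsVec, hAS]
    erw [fromBlocks_mulVec]
    simp only [Sum.elim_comp_inl, Sum.elim_comp_inr]
    funext x
    cases x with
    | inl i =>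
      simp only [Sum.elim_inl, Pi.add_apply]
      simp only [mulVec, dotProduct]
      by_cases hpn : p ≤ n
      · simp only [hpn, if_pos, if_pos (by omega : p ≤ n + 1)]
        have h2 : ∀ j : Fin p, (if (j : ℕ) = 0 then b i else 0) *
            (if (j : ℕ) + n + 1 = p then (1:ℝ) else 0) = 0 := by
          intro j
          have : ¬ ((j : ℕ) + n + 1 = p) := by omega
          simp [this]
        rw [Finset.sum_congr rfl (fun j _ => h2 j), Finset.sum_const, smul_zero, add_zero]
        have : n + 1 - p = (n - p) + 1 := by omega
        rw [this, pow_succ']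
        simp only [mulVec, dotProduct, Matrix.mul_apply, Finset.mul_sum, mul_assoc]
        rw [Finset.sum_comm]
        simp only [Finset.sum_mul, mul_assoc]
      · by_cases hpn1 : p ≤ n + 1
        · have hnp : n + 1 = p := by omega
          simp only [if_neg hpn, if_pos hpn1, Pi.zero_apply, mul_zero,
            Finset.sum_const, smul_zero, zero_add]
          have h2 : ∀ j : Fin p, (if (j : ℕ) = 0 then b i else 0) *
              (if (j : ℕ) + n + 1 = p then (1:ℝ) else 0) =
              (if (j : ℕ) = 0 then b i else 0) := by
            intro j
            by_cases hj : (j : ℕ) = 0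
            · simp [hj, hnp.symm ▸ (by omega : 0 + n + 1 = n + 1)]
              intro hcon; omega
            · simp [hj]
          rw [Finset.sum_congr rfl (fun j _ => h2 j)]
          have hp0 : 0 < p := by omega
          rw [Finset.sum_eq_single (⟨0, hp0⟩ : Fin p)]
          · have h0 : n + 1 - p = 0 := by omega
            rw [h0, pow_zero, Matrix.one_mulVec]
            simp
          · intro j _ hj
            have : (j : ℕ) ≠ 0 := by
              intro hcon; apply hj; exact Fin.ext hcon
            simp [this]
          · intro hcon; exact absurd (Finset.mem_univ _) hcon
        · have h1 : n + 1 - p = 0 := by omega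
          simp only [if_neg hpn, if_neg hpn1, Pi.zero_apply, mul_zero,
            Finset.sum_const, smul_zero, zero_add]
          have h2 : ∀ j : Fin p, (if (j : ℕ) = 0 then b i else 0) *
              (if (j : ℕ) + n + 1 = p then (1:ℝ) else 0) = 0 := by
            intro j
            by_cases hj : (j : ℕ) = 0
            · have : ¬ ((j : ℕ) + n + 1 = p) := by omega
              simp [this]
            · simp [hj]
          rw [Finset.sum_congr rfl (fun j _ => h2 j)]
          simp
    | inr i =>
      simp only [Sum.elim_inr, Pi.add_apply]
      simp only [mulVec, dotProduct, Matrix.zero_apply, zero_mul,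
        Finset.sum_const_zero, zero_add]
      simp only [show (i : ℕ) + (n + 1) + 1 = (i : ℕ) + n + 2 from by omega]
      have h2 : ∀ j : Fin p, (if (j : ℕ) = (i : ℕ) + 1 then (1:ℝ) else 0) *
          (if (j : ℕ) + n + 1 = p then (1:ℝ) else 0) =
          (if (j : ℕ) = (i : ℕ) + 1 ∧ (i : ℕ) + n + 2 = p then (1:ℝ) else 0) := by
        intro j
        by_cases hj : (j : ℕ) = (i : ℕ) + 1
        · simp only [hj, show (i : ℕ) + 1 + n + 1 = (i : ℕ) + n + 2 from by omega]
          simp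
        · simp [hj]
      rw [Finset.sum_congr rfl (fun j _ => h2 j)]
      by_cases hip : (i : ℕ) + n + 2 = p
      · rw [Finset.sum_eq_single (⟨(i : ℕ) + 1, by omega⟩ : Fin p)]
        · simp [hip]
        · intro j _ hj
          have : ¬ ((j : ℕ) = (i : ℕ) + 1) := by
            intro hcon; apply hj; exact Fin.ext hcon
          simp [this]
        · intro hcon; exact absurd (Finset.mem_univ _) hcon
      · have h3 : ∀ j : Fin p, (if (j : ℕ) = (i : ℕ) + 1 ∧ (i : ℕ) + n + 2 = p
            then (1:ℝ) else 0) = 0 := by intro j; simp [hip]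
        rw [Finset.sum_congr rfl (fun j _ => h3 j)]
        simp [hip]
  have hpow : ∀ n, (AS ^ n).mulVec (sVec 0) = sVec n := by
    intro n
    induction n with
    | zero => simp [mulVec_one]
    | succ n ih =>
      rw [pow_succ', ← Matrix.mulVec_mulVec, ih, hstep]
  have hout : ∀ j : ℕ, 1 ≤ j → t j = cS ⬝ᵥ (AS ^ (j - 1)).mulVec (sVec 0) := by
    intro j hj
    rw [hpow, hcS, hsVec]
    simp only
    rw [sumElim_dotProduct_sumElim]
    by_cases hjp : p ≤ j - 1
    · have h0 : ∀ i : Fin p, t (p - (i : ℕ)) *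
          (if (i : ℕ) + (j - 1) + 1 = p then (1:ℝ) else 0) = 0 := by
        intro i
        have : ¬ ((i : ℕ) + (j - 1) + 1 = p) := by omega
        simp [this]
      rw [if_pos hjp]
      unfold dotProduct
      rw [Finset.sum_congr rfl (fun i _ => h0 i), Finset.sum_const_zero, add_zero]
      have := hreal (j - 1 - p + 1) (by omega)
      simp only [Nat.add_sub_cancel] at this
      have heq : p + 1 + (j - 1 - p + 1) - 1 = j := by omega
      rw [heq] at this
      exact this
    · rw [if_neg hjp]
      unfold dotProduct
      simp only [Pi.zero_apply, mul_zero, Finset.sum_const_zero, zero_add]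
      rw [Finset.sum_eq_single (⟨p - j, by omega⟩ : Fin p)]
      · have : (p - j) + (j - 1) + 1 = p := by omega
        simp [this]
        congr 1
        omega
      · intro i _ hi
        have : ¬ ((i : ℕ) + (j - 1) + 1 = p) := by
          intro hcon
          apply hi
          apply Fin.ext
          simp
          omega
        simp [this]
      · intro hcon; exact absurd (Finset.mem_univ _) hcon
  -- nonnegativity in the sum world
  have hASpos : ∀ x y, 0 ≤ AS x y := by
    rintro (x | x) (y | y) <;> simp [hAS, fromBlocks]
    · exact hA x y
    · split_ifs <;> [exact hb x; exact le_refl 0]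
    · split_ifs <;> [exact zero_le_one; exact le_refl 0]
  have hbpos : ∀ x, 0 ≤ sVec 0 x := by
    rintro (x | x) <;> simp [hsVec]
    · split_ifs with hp
      · have hp0 : p = 0 := by omega
        simp [hp0, Matrix.one_mulVec]
        exact hb x
      · simp
    · split_ifs <;> [exact zero_le_one; exact le_refl 0]
  have hcpos : ∀ x, 0 ≤ cS x := by
    rintro (x | x) <;> simp [hcS]
    · exact hc x
    · exact ht _ (by omega)
  -- transport to Fin (k + p)
  have hdimeq : k + (p + 1) - 1 = k + p := rfl
  set e : Fin k ⊕ Fin p ≃ Fin (k + p) := finSumFinEquiv with he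
  have hpow2 : ∀ n : ℕ, (AS.submatrix e.symm e.symm) ^ n = (AS ^ n).submatrix e.symm e.symm := by
    intro n
    induction n with
    | zero => simp [Matrix.submatrix_one_equiv]
    | succ n ih => rw [pow_succ, pow_succ, ih, Matrix.submatrix_mul_equiv]
  refine ⟨AS.submatrix e.symm e.symm, sVec 0 ∘ e.symm, cS ∘ e.symm, ?_, ?_, ?_, ?_⟩
  · intro i j; exact hASpos _ _
  · intro i; exact hbpos _
  · intro i; exact hcpos _
  · intro j hj
    rw [hpow2, Matrix.submatrix_mulVec_equiv (AS ^ (j-1)) (sVec 0 ∘ ⇑e.symm) (⇑e.symm) e.symm]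
    simp only [Equiv.symm_symm]
    have hbe : (sVec 0 ∘ e.symm) ∘ e = sVec 0 := by
      funext x; simp
    rw [hbe, comp_equiv_dotProduct_comp_equiv cS ((AS ^ (j - 1)).mulVec (sVec 0)) e.symm]
    exact hout j hj
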